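/- Let P be a d-dimensional reflexive polytope and B a nonempty set of pairwise orthogonal roots of P. Then F := ∩_{b∈B} F_b is a nonempty face of P of codimension |B| (i.e., dim F = d − |B|), and the sum Σ_{b∈B} b of all elements of B is a lattice point lying in the relative interior of F. -/

import Mathlib

open Finset Set Pointwise

noncomputable section

/-- The standard pairing `⟨x, y⟩ = ∑ i, x i * y i` on `ℝ^d`. -/
def pairR {d : ℕ} (x y : Fin d → ℝ) : ℝ := ∑ i, x i * y i

/-- A point of `ℝ^d` is a lattice point if all its coordinates are integers. -/
def IsLatticePt {d : ℕ} (x : Fin d → ℝ) : Prop := ∀ i, ∃ n : ℤ, x i = (n : ℝ)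

/-- A lattice polytope: the convex hull of finitely many lattice points. -/
def IsLatticePolytope {d : ℕ} (P : Set (Fin d → ℝ)) : Prop :=
  ∃ V : Finset (Fin d → ℝ), (∀ x ∈ V, IsLatticePt x) ∧
    P = convexHull ℝ (V : Set (Fin d → ℝ))

/-- The dual polytope `P* = {y : ⟨x, y⟩ ≥ -1 for all x ∈ P}`. -/
def polarDual {d : ℕ} (P : Set (Fin d → ℝ)) : Set (Fin d → ℝ) :=
  {y | ∀ x ∈ P, -1 ≤ pairR x y}

/-- A reflexive polytope: a (full-dimensional) lattice polytope with `0` in its interior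
whose dual is again a lattice polytope. -/
def IsReflexive {d : ℕ} (P : Set (Fin d → ℝ)) : Prop :=
  IsLatticePolytope P ∧ (0 : Fin d → ℝ) ∈ interior P ∧ IsLatticePolytope (polarDual P)

/-- `F` is the facet of `P` with (unique) inner normal `η` normalized by `⟨η, F⟩ = -1`:
`F` is the part of `P` where the valid inequality `⟨η, ·⟩ ≥ -1` is tight, and `F` has
dimension `d - 1`. -/
def IsFacetNormal {d : ℕ} (P : Set (Fin d → ℝ)) (η : Fin d → ℝ)
    (F : Set (Fin d → ℝ)) : Prop :=
  (∀ x ∈ P, -1 ≤ pairR η x) ∧ F = {x ∈ P | pairR η x = -1} ∧ F.Nonempty ∧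
    Module.finrank ℝ (vectorSpan ℝ F) = d - 1

/-- `F` is a facet ((d-1)-dimensional face) of `P`. -/
def IsFacet {d : ℕ} (P F : Set (Fin d → ℝ)) : Prop := ∃ η, IsFacetNormal P η F

/-- A root of `P`: a lattice point in the relative interior of a facet of `P`. -/
def IsRoot {d : ℕ} (P : Set (Fin d → ℝ)) (m : Fin d → ℝ) : Prop :=
  IsLatticePt m ∧ ∃ F, IsFacet P F ∧ m ∈ intrinsicInterior ℝ F

/-- The facet `F_m` of `P` containing the root `m` in its relative interior
(for a root `m` there is exactly one such facet). -/
def rootFacet {d : ℕ} (P : Set (Fin d → ℝ)) (m : Fin d → ℝ) : Set (Fin d → ℝ) :=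
  ⋃₀ {F | IsFacet P F ∧ m ∈ intrinsicInterior ℝ F}

/-- The inner normal `η_m = η_{F_m}` of the facet of `P` containing the root `m`. -/
def rootNormal {d : ℕ} (P : Set (Fin d → ℝ)) (m : Fin d → ℝ) : Fin d → ℝ :=
  Classical.epsilon fun η => IsFacetNormal P η (rootFacet P m)

/-- The real extension of the `ℤ`-linear map on the lattice given by an integer matrix. -/
def intMatMap {d : ℕ} (A : Matrix (Fin d) (Fin d) ℤ) (x : Fin d → ℝ) : Fin d → ℝ :=
  (A.map (Int.cast : ℤ → ℝ)).mulVec x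

/-- `P` and `Q` are isomorphic as lattice polytopes: some `g ∈ GL_d(ℤ)` has real
extension mapping `P` onto `Q`. -/
def IsLatticeIso {d : ℕ} (P Q : Set (Fin d → ℝ)) : Prop :=
  ∃ A : Matrix (Fin d) (Fin d) ℤ, IsUnit A.det ∧ intMatMap A '' P = Q

end

/-!
Write `s = ∑ b ∈ B, b` and `F = ⋂ b ∈ B, F_b`. Orthogonality gives `⟨η_b, s⟩ = ⟨η_b, b⟩ = -1`
for every `b ∈ B`. Any other facet normal `w` of `P` is a lattice point with `⟨w, b⟩ ≥ -1`;
equality would force `w = η_b`, since `b` lies in the relative interior of `F_b`, so by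
integrality `⟨w, b⟩ ≥ 0` and hence `⟨w, s⟩ ≥ 0`. Thus `s ∈ F`, and the only facet inequalities
tight at `s` are those of the `η_b`: near `s`, `F` coincides with the affine subspace
`{x | ⟨η_b, x⟩ = -1 for all b ∈ B}`. That subspace therefore is the affine span of `F`, and `s`
is a relative interior point. Its dimension is `d - |B|` because the vectors `-b` form a dual
family to the `η_b`.
-/

open Filter Topology Module LinearMap

section TopologicalVectorSpace

variable {E : Type*} [AddCommGroup E] [Module ℝ E] [TopologicalSpace E]

theorem isExposed_setOf_eq_of_forall_le {A : Set E} (l : StrongDual ℝ E) {c : ℝ}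
    (hl : ∀ x ∈ A, c ≤ l x) : IsExposed ℝ A {x ∈ A | l x = c} := by
  rintro ⟨x₀, hx₀A, hx₀⟩
  refine ⟨-l, Set.ext fun x => ⟨fun ⟨hxA, hx⟩ => ⟨hxA, fun y hy => ?_⟩, fun ⟨hxA, hx⟩ => ⟨hxA, ?_⟩⟩⟩
  · simpa [hx] using hl y hy
  · have := hx x₀ hx₀A
    simp only [_root_.neg_apply, neg_le_neg_iff, hx₀] at this
    linarith [hl x hxA]

theorem mem_intrinsicInterior_of_isOpen {C U : Set E} {s : E} (hU : IsOpen U) (hsU : s ∈ U)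
    (hsC : s ∈ C) (hUC : ↑(affineSpan ℝ C) ∩ U ⊆ C) : s ∈ intrinsicInterior ℝ C := by
  refine mem_intrinsicInterior.2 ⟨⟨s, subset_affineSpan ℝ C hsC⟩, ?_, rfl⟩
  have hV : IsOpen ((↑) ⁻¹' U : Set (affineSpan ℝ C)) := hU.preimage continuous_subtype_val
  exact interior_maximal (fun (x : affineSpan ℝ C) (hx : (x : E) ∈ U) => hUC ⟨x.2, hx⟩) hV hsU

variable [IsTopologicalAddGroup E] [ContinuousSMul ℝ E]

theorem eventually_lineMap_mem_of_mem_intrinsicInterior {C : Set E} {b y : E}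
    (hb : b ∈ intrinsicInterior ℝ C) (hy : y ∈ affineSpan ℝ C) :
    ∀ᶠ t in 𝓝 (0 : ℝ), AffineMap.lineMap b y t ∈ C := by
  obtain ⟨⟨b, hbA⟩, hint, rfl⟩ := mem_intrinsicInterior.1 hb
  let γ : ℝ → affineSpan ℝ C := fun t => ⟨AffineMap.lineMap b y t, AffineMap.lineMap_mem t hbA hy⟩
  have hγ0 : γ 0 = ⟨b, hbA⟩ := Subtype.ext (AffineMap.lineMap_apply_zero _ _)
  have hγ : Continuous γ := AffineMap.lineMap_continuous.subtype_mk _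
  exact ((hγ.tendsto 0).eventually (hγ0 ▸ isOpen_interior.mem_nhds hint)).mono
    fun t ht => interior_subset (s := ((↑) ⁻¹' C : Set (affineSpan ℝ C))) ht

theorem eq_of_mem_intrinsicInterior_of_forall_le {C : Set E} {b : E} (f : E →ₗ[ℝ] ℝ) {c : ℝ}
    (hf : ∀ y ∈ C, c ≤ f y) (hb : b ∈ intrinsicInterior ℝ C) (hfb : f b = c) :
    ∀ y ∈ C, f y = c := by
  intro y hy
  have hnear := eventually_lineMap_mem_of_mem_intrinsicInterior hb (subset_affineSpan ℝ C hy)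
  obtain ⟨t, htC, ht⟩ :=
    ((hnear.filter_mono nhdsWithin_le_nhds).and self_mem_nhdsWithin).exists (f := 𝓝[<] 0)
  have hft : f (AffineMap.lineMap b y t) = c + t * (f y - c) := by
    rw [AffineMap.lineMap_apply_module', map_add, map_smul, map_sub, hfb, smul_eq_mul]; ring
  have hct := hf _ htC
  nlinarith [hf y hy, show t < 0 from ht]

theorem affineSpan_eq_of_inter_isOpen_subset {C U : Set E} {A : AffineSubspace ℝ E} {s : E}
    (hCA : C ⊆ A) (hsA : s ∈ A) (hU : IsOpen U) (hsU : s ∈ U) (hAU : ↑A ∩ U ⊆ C) :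
    affineSpan ℝ C = A := by
  refine le_antisymm (affineSpan_le.2 hCA) fun x hx => ?_
  have hnear : ∀ᶠ t in 𝓝 (0 : ℝ), AffineMap.lineMap s x t ∈ U :=
    AffineMap.lineMap_continuous.continuousAt.eventually_mem (by simpa using hU.mem_nhds hsU)
  obtain ⟨t, htU, ht⟩ :=
    ((hnear.filter_mono nhdsWithin_le_nhds).and self_mem_nhdsWithin).exists (f := 𝓝[≠] 0)
  have hs : s ∈ affineSpan ℝ C := subset_affineSpan ℝ C (hAU ⟨hsA, hsU⟩)
  have hxt : AffineMap.lineMap s x t ∈ affineSpan ℝ C :=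
    subset_affineSpan ℝ C (hAU ⟨AffineMap.lineMap_mem t hsA hx, htU⟩)
  have hdir : x -ᵥ s ∈ (affineSpan ℝ C).direction := by
    have := (affineSpan ℝ C).direction.smul_mem t⁻¹ (AffineSubspace.vsub_mem_direction hxt hs)
    rwa [AffineMap.lineMap_vsub_left, smul_smul, inv_mul_cancel₀ ht, one_smul] at this
  simpa using AffineSubspace.vadd_mem_of_mem_direction hdir hs

end TopologicalVectorSpace

theorem vectorSpan_le_ker_of_forall_eq {k V M : Type*} [Ring k] [AddCommGroup V] [Module k V]
    [AddCommGroup M] [Module k M] (f : V →ₗ[k] M) {C : Set V} {c : M} (hf : ∀ x ∈ C, f x = c) :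
    vectorSpan k C ≤ ker f := by
  rw [vectorSpan_def, Submodule.span_le]
  rintro _ ⟨x, hx, y, hy, rfl⟩
  simp [hf x hx, hf y hy]

theorem finrank_ker_pi_of_biorthogonal {K E ι : Type*} [Field K] [AddCommGroup E] [Module K E]
    [FiniteDimensional K E] [Fintype ι] [DecidableEq ι] (f : ι → Dual K E) (v : ι → E)
    (hfv : ∀ i j, f i (v j) = if i = j then 1 else 0) :
    finrank K (ker (LinearMap.pi f)) = finrank K E - Fintype.card ι := by
  have hsurj : LinearMap.range (LinearMap.pi f) = ⊤ :=
    LinearMap.range_eq_top.2 fun c => ⟨∑ j, c j • v j, funext fun i => by simp [map_sum, hfv]⟩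
  have := (LinearMap.pi f).finrank_range_add_finrank_ker
  rw [hsurj, finrank_top, Module.finrank_fintype_fun_eq_card] at this
  omega

/-- Constraints slack at `s` stay slack near `s`. -/
theorem exists_isOpen_forall_le_of_tight {ι X : Type*} [TopologicalSpace X] (W : Finset ι)
    {g : ι → X → ℝ} (hg : ∀ i, Continuous (g i)) {c : ℝ} {s : X} (hs : ∀ i ∈ W, c ≤ g i s) :
    ∃ U, IsOpen U ∧ s ∈ U ∧
      ∀ x ∈ U, (∀ i ∈ W, g i s = c → g i x = c) → ∀ i ∈ W, c ≤ g i x := by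
  classical
  refine ⟨⋂ i ∈ {i ∈ W | c < g i s}, {x | c < g i x},
    isOpen_biInter_finset fun i _ => isOpen_lt continuous_const (hg i), ?_, ?_⟩
  · simp only [mem_iInter₂, Finset.mem_filter]
    exact fun i hi => hi.2
  intro x hxU htight i hi
  rcases (hs i hi).lt_or_eq with hlt | heq
  · exact (by simpa using mem_iInter₂.1 hxU i (by simp [hi, hlt]) : c < g i x).le
  · exact (htight i hi heq.symm).ge

variable {d : ℕ}

theorem pairR_eq_dotProduct (x y : Fin d → ℝ) : pairR x y = x ⬝ᵥ y := rfl

theorem pairR_comm (x y : Fin d → ℝ) : pairR x y = pairR y x := dotProduct_comm x y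

theorem pairR_sum_right {ι : Type*} (x : Fin d → ℝ) (s : Finset ι) (y : ι → Fin d → ℝ) :
    pairR x (∑ i ∈ s, y i) = ∑ i ∈ s, pairR x (y i) :=
  dotProduct_sum x s y

theorem pairR_sub_right (x y z : Fin d → ℝ) : pairR x (y - z) = pairR x y - pairR x z :=
  dotProduct_sub x y z

theorem isLatticePt_iff_forall_mem_bot {x : Fin d → ℝ} :
    IsLatticePt x ↔ ∀ i, x i ∈ (⊥ : Subring ℝ) := by
  simp [IsLatticePt, Subring.mem_bot, eq_comm]

theorem IsLatticePt.sum {ι : Type*} {s : Finset ι} {x : ι → Fin d → ℝ}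
    (hx : ∀ i ∈ s, IsLatticePt (x i)) : IsLatticePt (∑ i ∈ s, x i) :=
  isLatticePt_iff_forall_mem_bot.2 fun j => by
    rw [Finset.sum_apply]
    exact Subring.sum_mem _ fun i hi => isLatticePt_iff_forall_mem_bot.1 (hx i hi) j

theorem IsLatticePt.pairR_mem_bot {x y : Fin d → ℝ} (hx : IsLatticePt x) (hy : IsLatticePt y) :
    pairR x y ∈ (⊥ : Subring ℝ) :=
  Subring.sum_mem _ fun i _ => Subring.mul_mem _ (isLatticePt_iff_forall_mem_bot.1 hx i)
    (isLatticePt_iff_forall_mem_bot.1 hy i)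

theorem exists_mem_polarDual_pairR_lt {P : Set (Fin d → ℝ)} (hconv : Convex ℝ P)
    (hclosed : IsClosed P) (h0 : 0 ∈ P) {x : Fin d → ℝ} (hx : x ∉ P) :
    ∃ y ∈ polarDual P, pairR x y < -1 := by
  obtain ⟨f, u, hfP, hfx⟩ := geometric_hahn_banach_closed_point hconv hclosed hx
  have hu : 0 < u := by simpa using hfP 0 h0
  set g := (dotProductEquiv ℝ (Fin d)).symm f.toLinearMap
  have hg : ∀ z, pairR z ((-u⁻¹) • g) = -(u⁻¹ * f z) := fun z => by
    rw [pairR_eq_dotProduct, dotProduct_smul, dotProduct_comm, ← dotProductEquiv_apply_apply,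
      LinearEquiv.apply_symm_apply, smul_eq_mul, neg_mul]
    rfl
  refine ⟨(-u⁻¹) • g, fun z hz => ?_, ?_⟩
  · rw [hg, neg_le_neg_iff, inv_mul_le_one₀ hu]
    exact (hfP z hz).le
  · rw [hg, neg_lt_neg_iff, one_lt_inv_mul₀ hu]
    exact hfx

/-- By bipolarity, `P` is cut out by the vertices `W` of `P*`. -/
theorem IsReflexive.exists_finset_isLatticePt_mem_iff {P : Set (Fin d → ℝ)} (hP : IsReflexive P) :
    ∃ W : Finset (Fin d → ℝ), (∀ w ∈ W, IsLatticePt w) ∧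
      ∀ x, x ∈ P ↔ ∀ w ∈ W, -1 ≤ pairR w x := by
  obtain ⟨⟨V, -, rfl⟩, h0, W, hWlat, hW⟩ := hP
  refine ⟨W, hWlat, fun x => ⟨fun hx w hw => ?_, fun hx => ?_⟩⟩
  · have hw' : w ∈ polarDual (convexHull ℝ (V : Set (Fin d → ℝ))) :=
      hW ▸ subset_convexHull ℝ _ hw
    exact pairR_comm x w ▸ hw' x hx
  · by_contra hxP
    obtain ⟨y, hy, hxy⟩ := exists_mem_polarDual_pairR_lt (convex_convexHull ℝ _)
      (V.finite_toSet.isCompact_convexHull (𝕜 := ℝ)).isClosed (interior_subset h0) hxP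
    have hhull : convexHull ℝ (W : Set (Fin d → ℝ)) ⊆ {y | -1 ≤ pairR x y} :=
      convexHull_min (fun w hw => show -1 ≤ pairR x w from pairR_comm w x ▸ hx w hw)
        (convex_halfSpace_ge (dotProductEquiv ℝ (Fin d) x).isLinear (-1))
    exact (hhull (hW ▸ hy)).not_gt hxy

theorem IsFacetNormal.eq_of_pairR_eq {P F : Set (Fin d → ℝ)} {η g b : Fin d → ℝ}
    (hη : IsFacetNormal P η F) (hb : b ∈ intrinsicInterior ℝ F)
    (hg : ∀ x ∈ P, -1 ≤ pairR g x) (hgb : pairR g b = -1) : g = η := by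
  obtain ⟨-, rfl, -, hdim⟩ := hη
  set φ := dotProductEquiv ℝ (Fin d)
  have hηb : φ η b = -1 := (intrinsicInterior_subset hb).2
  have hgF := eq_of_mem_intrinsicInterior_of_forall_le (φ g) (fun x hx => hg x hx.1) hb hgb
  have hker : vectorSpan ℝ {x ∈ P | pairR η x = -1} = ker (φ η) := by
    refine Submodule.eq_of_le_of_finrank_eq (vectorSpan_le_ker_of_forall_eq _ fun x hx => hx.2) ?_
    have hne : φ η ≠ 0 := fun h => by simp [h] at hηb
    have := Module.Dual.finrank_ker_add_one_of_ne_zero hne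
    rw [Module.finrank_fin_fun] at this
    omega
  refine φ.injective (LinearMap.ext fun x => ?_)
  have hmem : x + φ η x • b ∈ vectorSpan ℝ {x ∈ P | pairR η x = -1} := by
    rw [hker, LinearMap.mem_ker, map_add, map_smul, hηb, smul_eq_mul]; ring
  have := vectorSpan_le_ker_of_forall_eq (φ g) hgF hmem
  rw [LinearMap.mem_ker, map_add, map_smul, smul_eq_mul] at this
  have hgb' : φ g b = -1 := hgb
  rw [hgb'] at this
  linarith

section Roots

variable {P : Set (Fin d → ℝ)}

theorem rootFacet_eq_of_isFacet {F : Set (Fin d → ℝ)} {m : Fin d → ℝ} (hF : IsFacet P F)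
    (hm : m ∈ intrinsicInterior ℝ F) : rootFacet P m = F := by
  obtain ⟨η, hη⟩ := hF
  refine (sUnion_subset ?_).antisymm (subset_sUnion_of_mem ⟨⟨η, hη⟩, hm⟩)
  obtain ⟨hηP, rfl, -, -⟩ := hη
  rintro G ⟨⟨ξ, hξ⟩, hmG⟩ x hxG
  have hGP : G ⊆ P := hξ.2.1 ▸ sep_subset _ _
  exact ⟨hGP hxG, eq_of_mem_intrinsicInterior_of_forall_le (dotProductEquiv ℝ (Fin d) η)
    (fun y hy => hηP y (hGP hy)) hmG (intrinsicInterior_subset hm).2 x hxG⟩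

variable {m : Fin d → ℝ}

theorem IsRoot.isFacetNormal (hm : IsRoot P m) :
    IsFacetNormal P (rootNormal P m) (rootFacet P m) := by
  obtain ⟨-, F, hF, hmF⟩ := hm
  exact Classical.epsilon_spec (rootFacet_eq_of_isFacet hF hmF ▸ hF)

theorem IsRoot.mem_intrinsicInterior (hm : IsRoot P m) :
    m ∈ intrinsicInterior ℝ (rootFacet P m) := by
  obtain ⟨-, F, hF, hmF⟩ := hm
  rwa [rootFacet_eq_of_isFacet hF hmF]

theorem IsRoot.rootFacet_eq (hm : IsRoot P m) :
    rootFacet P m = {x ∈ P | pairR (rootNormal P m) x = -1} :=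
  hm.isFacetNormal.2.1

theorem IsRoot.mem_rootFacet (hm : IsRoot P m) : m ∈ P ∧ pairR (rootNormal P m) m = -1 :=
  hm.rootFacet_eq.subset (intrinsicInterior_subset hm.mem_intrinsicInterior)

theorem IsRoot.isExposed_rootFacet (hm : IsRoot P m) : IsExposed ℝ P (rootFacet P m) :=
  hm.rootFacet_eq ▸ isExposed_setOf_eq_of_forall_le
    (dotProductEquiv ℝ (Fin d) (rootNormal P m)).toContinuousLinearMap hm.isFacetNormal.1

theorem IsRoot.eq_rootNormal_or_nonneg (hm : IsRoot P m) {w : Fin d → ℝ} (hw : IsLatticePt w)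
    (hwP : ∀ x ∈ P, -1 ≤ pairR w x) : w = rootNormal P m ∨ 0 ≤ pairR w m := by
  obtain ⟨n, hn⟩ := Subring.mem_bot.1 (hw.pairR_mem_bot hm.1)
  rcases (hwP m hm.mem_rootFacet.1).eq_or_lt with heq | hlt
  · exact Or.inl (hm.isFacetNormal.eq_of_pairR_eq hm.mem_intrinsicInterior hwP heq.symm)
  · rw [← hn] at hlt ⊢
    have : (-1 : ℤ) < n := by exact_mod_cast hlt
    exact Or.inr (by exact_mod_cast (by omega : (0 : ℤ) ≤ n))

end Roots

noncomputable def rootNormalPairing (P : Set (Fin d → ℝ)) (B : Finset (Fin d → ℝ)) :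
    (Fin d → ℝ) →ₗ[ℝ] (B → ℝ) :=
  LinearMap.pi fun b => dotProductEquiv ℝ (Fin d) (rootNormal P b)

theorem mem_ker_rootNormalPairing {P : Set (Fin d → ℝ)} {B : Finset (Fin d → ℝ)}
    {v : Fin d → ℝ} :
    v ∈ ker (rootNormalPairing P B) ↔ ∀ b ∈ B, pairR (rootNormal P b) v = 0 := by
  simp [rootNormalPairing, funext_iff, pairR_eq_dotProduct]

section OrthogonalRoots

variable {P : Set (Fin d → ℝ)} {B : Finset (Fin d → ℝ)}
  (hBroot : ∀ b ∈ B, IsRoot P b)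
  (horth : ∀ b ∈ B, ∀ b' ∈ B, b ≠ b' →
    pairR (rootNormal P b) b' = 0 ∧ pairR (rootNormal P b') b = 0)
include hBroot horth

theorem pairR_rootNormal_sum {b : Fin d → ℝ} (hb : b ∈ B) :
    pairR (rootNormal P b) (∑ b' ∈ B, b') = -1 := by
  rw [pairR_sum_right,
    Finset.sum_eq_single_of_mem b hb fun b' hb' hne => (horth b hb b' hb' hne.symm).1]
  exact (hBroot b hb).mem_rootFacet.2

theorem finrank_ker_rootNormalPairing :
    finrank ℝ (ker (rootNormalPairing P B)) = d - B.card := by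
  classical
  have hpair : ∀ b b' : B, rootNormal P b ⬝ᵥ -(b' : Fin d → ℝ) = if b = b' then 1 else 0 := by
    rintro ⟨b, hb⟩ ⟨b', hb'⟩
    rw [dotProduct_neg, ← pairR_eq_dotProduct]
    by_cases h : b = b'
    · subst h
      simp [(hBroot b hb).mem_rootFacet.2]
    · simp [h, (horth b hb b' hb' h).1]
  rw [rootNormalPairing, finrank_ker_pi_of_biorthogonal _ (fun b : B => -(b : Fin d → ℝ)) hpair,
    Module.finrank_fin_fun, Fintype.card_coe]

theorem mem_mk'_sum_ker_rootNormalPairing {x : Fin d → ℝ} :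
    x ∈ AffineSubspace.mk' (∑ b ∈ B, b) (ker (rootNormalPairing P B)) ↔
      ∀ b ∈ B, pairR (rootNormal P b) x = -1 := by
  rw [AffineSubspace.mem_mk', vsub_eq_sub, mem_ker_rootNormalPairing]
  refine forall₂_congr fun b hb => ?_
  rw [pairR_sub_right, pairR_rootNormal_sum hBroot horth hb, sub_eq_zero]

theorem biInter_rootFacet_eq_inter (hB : B.Nonempty) :
    ⋂ b ∈ B, rootFacet P b =
      P ∩ AffineSubspace.mk' (∑ b ∈ B, b) (ker (rootNormalPairing P B)) := by
  ext x
  rw [mem_inter_iff, SetLike.mem_coe, mem_mk'_sum_ker_rootNormalPairing hBroot horth, mem_iInter₂]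
  obtain ⟨b₀, hb₀⟩ := hB
  constructor
  · intro hx
    exact ⟨((hBroot b₀ hb₀).rootFacet_eq.subset (hx b₀ hb₀)).1,
      fun b hb => ((hBroot b hb).rootFacet_eq.subset (hx b hb)).2⟩
  · rintro ⟨hxP, hx⟩ b hb
    exact (hBroot b hb).rootFacet_eq.superset ⟨hxP, hx b hb⟩

theorem exists_isOpen_mk'_inter_subset {W : Finset (Fin d → ℝ)}
    (hPW : ∀ x, x ∈ P ↔ ∀ w ∈ W, -1 ≤ pairR w x) (hWlat : ∀ w ∈ W, IsLatticePt w) :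
    ∃ U, IsOpen U ∧ ∑ b ∈ B, b ∈ U ∧
      ↑(AffineSubspace.mk' (∑ b ∈ B, b) (ker (rootNormalPairing P B))) ∩ U ⊆ P := by
  have hdich : ∀ w ∈ W, (∃ b ∈ B, w = rootNormal P b) ∨ 0 ≤ pairR w (∑ b ∈ B, b) := by
    intro w hw
    by_cases h : ∃ b ∈ B, w = rootNormal P b
    · exact Or.inl h
    · push Not at h
      refine Or.inr ((pairR_sum_right w B fun b => b) ▸ Finset.sum_nonneg fun b hb => ?_)
      exact ((hBroot b hb).eq_rootNormal_or_nonneg (hWlat w hw)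
        fun x hx => (hPW x).1 hx w hw).resolve_left (h b hb)
  have hs : ∀ w ∈ W, -1 ≤ pairR w (∑ b ∈ B, b) := fun w hw => by
    rcases hdich w hw with ⟨b, hb, rfl⟩ | h
    · exact (pairR_rootNormal_sum hBroot horth hb).ge
    · linarith
  obtain ⟨U, hU, hsU, hUP⟩ :=
    exists_isOpen_forall_le_of_tight W (fun w => by unfold pairR; fun_prop) hs
  refine ⟨U, hU, hsU, fun x ⟨hxA, hxU⟩ => (hPW x).2 (hUP x hxU fun w hw hws => ?_)⟩
  rcases hdich w hw with ⟨b, hb, rfl⟩ | h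
  · exact (mem_mk'_sum_ker_rootNormalPairing hBroot horth).1 hxA b hb
  · linarith

end OrthogonalRoots

/-- For a nonempty set `B` of pairwise orthogonal roots of a reflexive polytope `P`,
the intersection `F = ⋂_{b ∈ B} F_b` is a nonempty (exposed) face of `P` of codimension
`|B|`, and `∑_{b ∈ B} b` is a lattice point in the relative interior of `F`. -/
theorem stmt12 {d : ℕ} (P : Set (Fin d → ℝ)) (hP : IsReflexive P)
    (B : Finset (Fin d → ℝ)) (hBne : B.Nonempty)
    (hBroot : ∀ b ∈ B, IsRoot P b)
    (horth : ∀ b ∈ B, ∀ b' ∈ B, b ≠ b' →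
      pairR (rootNormal P b) b' = 0 ∧ pairR (rootNormal P b') b = 0) :
    (⋂ b ∈ B, rootFacet P b).Nonempty ∧
    IsExposed ℝ P (⋂ b ∈ B, rootFacet P b) ∧
    Module.finrank ℝ (vectorSpan ℝ (⋂ b ∈ B, rootFacet P b)) = d - B.card ∧
    IsLatticePt (∑ b ∈ B, b) ∧
    (∑ b ∈ B, b) ∈ intrinsicInterior ℝ (⋂ b ∈ B, rootFacet P b) := by
  classical
  obtain ⟨W, hWlat, hPW⟩ := hP.exists_finset_isLatticePt_mem_iff
  set A := AffineSubspace.mk' (∑ b ∈ B, b) (ker (rootNormalPairing P B))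
  have hF : ⋂ b ∈ B, rootFacet P b = P ∩ A := biInter_rootFacet_eq_inter hBroot horth hBne
  obtain ⟨U, hU, hsU, hAU⟩ := exists_isOpen_mk'_inter_subset hBroot horth hPW hWlat
  have hAUF : ↑A ∩ U ⊆ ⋂ b ∈ B, rootFacet P b := fun x hx => hF ▸ ⟨hAU hx, hx.1⟩
  have hsA : ∑ b ∈ B, b ∈ A := AffineSubspace.self_mem_mk' _ _
  have hsF : ∑ b ∈ B, b ∈ ⋂ b ∈ B, rootFacet P b := hAUF ⟨hsA, hsU⟩
  have hspan : affineSpan ℝ (⋂ b ∈ B, rootFacet P b) = A :=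
    affineSpan_eq_of_inter_isOpen_subset (hF ▸ inter_subset_right) hsA hU hsU hAUF
  refine ⟨⟨_, hsF⟩, ?_, ?_, IsLatticePt.sum fun b hb => (hBroot b hb).1,
    mem_intrinsicInterior_of_isOpen hU hsU hsF (hspan ▸ hAUF)⟩
  · simpa [Set.sInter_image] using IsExposed.sInter (hBne.image (rootFacet P))
      (by simpa using fun b hb => (hBroot b hb).isExposed_rootFacet)
  · rw [← direction_affineSpan, hspan, AffineSubspace.direction_mk',
      finrank_ker_rootNormalPairing hBroot horth]
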